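/- Let ν be a multi-index with ν ≠ 0 and let (Υ_j)_{j≥1} be nonnegative real numbers. Then ∑_{j≥1, ν_j ≥ 1} ∑_{m ≤ ν − e_j} |m|! (m_j + 1) Υ_j Υ^m S(ν_j, m_j + 1) ∏_{i≥1, i≠j} S(ν_i, m_i) = ∑_{m ≤ ν} |m|! Υ^m ∏_{i≥1} S(ν_i, m_i). -/

import Mathlib

/-!
Split `|m|! = ∑_j m_j (|m| - 1)!`, exchange the two sums, and in the `j`-th sum substitute
`m = m' + e_j`: then `(|m| - 1)! = |m'|!`, `Υ^m = Υ_j Υ^{m'}` and only the `j`-th Stirling factor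
changes, to `S(ν_j, m'_j + 1)`. The term `m = 0` on the right, where the splitting fails,
vanishes because `S(ν_i, 0) = 0` for every `i` with `ν_i ≠ 0`, and there is such an `i`.
-/

/-- Stirling numbers of the second kind, as real numbers:
`S(n,k) = (1/k!) ∑_{j=0}^{k} (−1)^{k−j} binom(k,j) j^n`. -/
noncomputable def stirlingS2 (n k : ℕ) : ℝ :=
  (1 / (k.factorial : ℝ)) *
    ∑ j ∈ Finset.range (k + 1), (-1 : ℝ) ^ (k - j) * (k.choose j : ℝ) * (j : ℝ) ^ n

/-- The order `|ν| = ∑_j ν_j` of a multi-index `ν`. -/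
def multiOrder (ν : ℕ →₀ ℕ) : ℕ := ν.sum fun _ k => k

/-- `Υ^m = ∏_{j : m_j ≠ 0} Υ_j^{m_j}`. -/
noncomputable def multiPow (Υ : ℕ → ℝ) (m : ℕ →₀ ℕ) : ℝ := m.prod fun j k => Υ j ^ k

lemma stirlingS2_zero_right {n : ℕ} (hn : n ≠ 0) : stirlingS2 n 0 = 0 := by
  simp [stirlingS2, zero_pow hn]

lemma multiOrder_add (m n : ℕ →₀ ℕ) : multiOrder (m + n) = multiOrder m + multiOrder n :=
  Finsupp.sum_add_index' (fun _ => rfl) (fun _ _ _ => rfl)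

lemma multiOrder_single (j k : ℕ) : multiOrder (Finsupp.single j k) = k :=
  Finsupp.sum_single_index rfl

lemma multiOrder_eq_sum_of_support_subset {m : ℕ →₀ ℕ} {s : Finset ℕ} (hs : m.support ⊆ s) :
    multiOrder m = ∑ j ∈ s, m j :=
  Finsupp.sum_of_support_subset m hs _ fun _ _ => rfl

lemma multiOrder_eq_zero_iff {m : ℕ →₀ ℕ} : multiOrder m = 0 ↔ m = 0 := by
  rw [multiOrder_eq_sum_of_support_subset subset_rfl, Finset.sum_eq_zero_iff]
  simp [Finsupp.ext_iff]

lemma multiPow_add (Υ : ℕ → ℝ) (m n : ℕ →₀ ℕ) :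
    multiPow Υ (m + n) = multiPow Υ m * multiPow Υ n :=
  Finsupp.prod_add_index' (fun _ => pow_zero _) (fun _ _ _ => pow_add _ _ _)

lemma multiPow_single_one (Υ : ℕ → ℝ) (j : ℕ) : multiPow Υ (Finsupp.single j 1) = Υ j :=
  (Finsupp.prod_single_index (h := fun j k => Υ j ^ k) (pow_zero _)).trans (pow_one _)

lemma factorial_multiOrder_eq_sum_mul {m : ℕ →₀ ℕ} {s : Finset ℕ} (hm : m ≠ 0)
    (hs : m.support ⊆ s) :
    (multiOrder m).factorial = ∑ j ∈ s, m j * (multiOrder m - 1).factorial := by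
  rw [← Finset.sum_mul, ← multiOrder_eq_sum_of_support_subset hs,
    Nat.mul_factorial_pred (multiOrder_eq_zero_iff.not.mpr hm)]

lemma Finset.prod_apply_add_single_one {M : Type*} [CommMonoid M] (f : ℕ → ℕ → M)
    {s : Finset ℕ} {j : ℕ} (hj : j ∈ s) (m : ℕ →₀ ℕ) :
    ∏ i ∈ s, f i ((m + Finsupp.single j 1 : ℕ →₀ ℕ) i) =
      f j (m j + 1) * ∏ i ∈ s.erase j, f i (m i) := by
  rw [← Finset.mul_prod_erase s _ hj]
  congr 1
  · simp
  · refine Finset.prod_congr rfl fun i hi => ?_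
    simp [(Finset.ne_of_mem_erase hi).symm]

/-- Summing `m_j g(m)` over `m ≤ ν` only sees `m ≥ e_j`, i.e. `m = m' + e_j` with `m' ≤ ν - e_j`. -/
lemma Finset.sum_Iic_apply_mul_eq_sum_Iic_tsub_single {R : Type*} [CommSemiring R]
    (g : (ℕ →₀ ℕ) → R) {ν : ℕ →₀ ℕ} {j : ℕ} (hj : ν j ≠ 0) :
    ∑ m ∈ Finset.Iic ν, (m j : R) * g m =
      ∑ m ∈ Finset.Iic (ν - Finsupp.single j 1),
        ((m j : R) + 1) * g (m + Finsupp.single j 1) := by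
  have hjν : Finsupp.single j 1 ≤ ν := Finsupp.single_le_iff.mpr (Nat.one_le_iff_ne_zero.mpr hj)
  have hIcc : Finset.Icc (Finsupp.single j 1) ν =
      (Finset.Iic (ν - Finsupp.single j 1)).map (addRightEmbedding (Finsupp.single j 1)) := by
    rw [Finset.Iic_eq_Icc, Finset.map_add_right_Icc, bot_eq_zero, zero_add,
      tsub_add_cancel_of_le hjν]
  have hzero : ∀ m ∈ Finset.Iic ν, m ∉ Finset.Icc (Finsupp.single j 1) ν → (m j : R) * g m = 0 := by
    intro m hm hout
    have hmj : m j = 0 := by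
      simpa [Finset.mem_Iic.mp hm, Finsupp.single_le_iff, Nat.one_le_iff_ne_zero] using hout
    simp [hmj]
  rw [← Finset.sum_subset (fun m hm => Finset.mem_Iic.mpr (Finset.mem_Icc.mp hm).2) hzero, hIcc,
    Finset.sum_map]
  simp

theorem stmt_16_general (ν : ℕ →₀ ℕ) (hν : ν ≠ 0) (Υ : ℕ → ℝ) :
    ∑ j ∈ ν.support, ∑ m ∈ Finset.Iic (ν - Finsupp.single j 1),
      ((multiOrder m).factorial : ℝ) * ((m j : ℝ) + 1) * Υ j * multiPow Υ m *
        stirlingS2 (ν j) (m j + 1) * ∏ i ∈ ν.support.erase j, stirlingS2 (ν i) (m i)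
      = ∑ m ∈ Finset.Iic ν,
          ((multiOrder m).factorial : ℝ) * multiPow Υ m *
            ∏ i ∈ ν.support, stirlingS2 (ν i) (m i) := by
  set F : (ℕ →₀ ℕ) → ℝ := fun m => multiPow Υ m * ∏ i ∈ ν.support, stirlingS2 (ν i) (m i)
  have hF0 : F 0 = 0 := by
    obtain ⟨i, hi⟩ := Finsupp.support_nonempty_iff.mpr hν
    simp only [F, Finsupp.coe_zero, Pi.zero_apply]
    rw [Finset.prod_eq_zero hi (stirlingS2_zero_right (Finsupp.mem_support_iff.mp hi)), mul_zero]
  have hsplit : ∀ m ∈ Finset.Iic ν, ((multiOrder m).factorial : ℝ) * F m =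
      ∑ j ∈ ν.support, (m j : ℝ) * (((multiOrder m - 1).factorial : ℝ) * F m) := by
    intro m hm
    rcases eq_or_ne m 0 with rfl | hm0
    · simp [hF0]
    · rw [factorial_multiOrder_eq_sum_mul hm0 (Finsupp.support_mono (Finset.mem_Iic.mp hm))]
      push_cast
      simp only [Finset.sum_mul, mul_assoc]
  symm
  calc _ = ∑ m ∈ Finset.Iic ν, ((multiOrder m).factorial : ℝ) * F m := by simp only [F, mul_assoc]
    _ = ∑ j ∈ ν.support, ∑ m ∈ Finset.Iic ν,
          (m j : ℝ) * (((multiOrder m - 1).factorial : ℝ) * F m) := by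
        rw [Finset.sum_congr rfl hsplit, Finset.sum_comm]
    _ = _ := by
        refine Finset.sum_congr rfl fun j hj => ?_
        rw [Finset.sum_Iic_apply_mul_eq_sum_Iic_tsub_single _ (Finsupp.mem_support_iff.mp hj)]
        refine Finset.sum_congr rfl fun m _ => ?_
        simp only [F, multiOrder_add, multiOrder_single, Nat.add_sub_cancel, multiPow_add,
          multiPow_single_one, Finset.prod_apply_add_single_one _ hj]
        ring

theorem stmt_16 (ν : ℕ →₀ ℕ) (hν : ν ≠ 0) (Υ : ℕ → ℝ) (hΥ : ∀ j, 0 ≤ Υ j) :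
    ∑ j ∈ ν.support, ∑ m ∈ Finset.Iic (ν - Finsupp.single j 1),
      ((multiOrder m).factorial : ℝ) * ((m j : ℝ) + 1) * Υ j * multiPow Υ m *
        stirlingS2 (ν j) (m j + 1) * ∏ i ∈ ν.support.erase j, stirlingS2 (ν i) (m i)
      = ∑ m ∈ Finset.Iic ν,
          ((multiOrder m).factorial : ℝ) * multiPow Υ m *
            ∏ i ∈ ν.support, stirlingS2 (ν i) (m i) :=
  stmt_16_general ν hν Υ
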